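/- arXiv:1005.1216 — 2 statements merged into one kernel-verified Lean document; each statement's English description precedes it below -/
import Mathlib

section
/- The formal power series f_TM(x) = ∏_{n=0}^∞ (1 − x^{2^n}) = ∑_{n=0}^∞ (−1)^{a_n} x^n, where a_n is the reduction modulo 2 of the sum of binary digits of n, is transcendental over the field of rational functions ℂ(x). -/
/-!
Let `p` be the minimal polynomial of `f = f_TM` over `ℂ(x)`, of degree `d ≥ 1`, and let `p^σ` be
`p` with `x ↦ x²` applied to its coefficients. From `p(f) = 0` and `f(x) = (1 - x) f(x²)`, the
polynomial `(1 - x)^d p^σ(Y / (1 - x))` is a monic annihilator of `f` of degree `d`, hence equals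
`p`. On constant terms this reads `p₀(x²) (1 - x)^d = p₀(x)`. The squaring map fixes `1` and is
unramified there, so `p₀(x²)` and `p₀(x)` vanish to the same order at `x = 1`; hence `p₀ = 0`,
which is impossible for the minimal polynomial of `f ≠ 0`.
-/

/-- The Thue–Morse formal power series
`f_TM(x) = ∏_{n=0}^∞ (1 − x^{2^n}) = ∑_{n=0}^∞ (−1)^{a_n} x^n ∈ ℤ[[x]] ⊆ ℂ[[x]]`,
where `a_n` is the sum (mod 2) of the binary digits of `n`; its `n`-th coefficient
is `(−1)^{(sum of binary digits of n)}`. -/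
noncomputable def fTM : PowerSeries ℂ :=
  PowerSeries.mk fun n => (-1 : ℂ) ^ (Nat.digits 2 n).sum

open scoped RatFunc
open scoped LaurentSeries
open Polynomial nonZeroDivisors

theorem Polynomial.rootMultiplicity_one_expand {R : Type*} [CommRing R] [IsDomain R] {n : ℕ}
    (hn : (n : R) ≠ 0) (p : R[X]) :
    rootMultiplicity 1 (expand R n p) = rootMultiplicity 1 p := by
  rcases eq_or_ne p 0 with rfl | hp
  · simp
  obtain ⟨q, hpq, hq⟩ := p.exists_eq_pow_rootMultiplicity_mul_and_not_dvd hp 1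
  set m := rootMultiplicity 1 p
  obtain ⟨g, hXn, hg⟩ : ∃ g : R[X], X ^ n - 1 = g * (X - 1) ∧ g.eval 1 = n :=
    ⟨∑ i ∈ Finset.range n, X ^ i, (geom_sum_mul X n).symm, by simp [eval_finsetSum]⟩
  have hexpand : expand R n p = g ^ m * expand R n q * (X - C 1) ^ m := by
    rw [hpq, map_mul, map_pow, map_sub, expand_X, expand_C, C_1, hXn, mul_pow]
    ring
  have hne : (g ^ m * expand R n q).eval 1 ≠ 0 := by
    have hq1 : q.eval 1 ≠ 0 := fun h => hq (dvd_iff_isRoot.2 h)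
    simp [hg, expand_eval, hn, hq1]
  rw [hexpand, rootMultiplicity_mul_X_sub_C_pow (fun h => hne (by rw [h, eval_zero])),
    rootMultiplicity_eq_zero hne, zero_add]

/-- If `x = c σ(x)`, then scaling the roots of `σ(minpoly K x)` by `c` gives a monic annihilator
of `x` of the same degree, i.e. `minpoly K x` itself. -/
theorem minpoly.map_coeff_mul_pow_eq_coeff {K L : Type*} [Field K] [CommRing L] [Algebra K L]
    {σK : K →+* K} {σL : L →+* L} (hσ : σL.comp (algebraMap K L) = (algebraMap K L).comp σK)
    {x : L} (hx : IsIntegral K x) {c : K} (hxc : x = algebraMap K L c * σL x) (i : ℕ) :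
    σK ((minpoly K x).coeff i) * c ^ ((minpoly K x).natDegree - i) = (minpoly K x).coeff i := by
  set p := minpoly K x
  have hmap : Polynomial.aeval (σL x) (p.map σK) = 0 := by
    rw [aeval_def, eval₂_map, ← hσ, ← hom_eval₂, ← aeval_def, minpoly.aeval, map_zero]
  have hscale : (p.map σK).scaleRoots c = p := by
    refine minpoly.unique K x ((monic_scaleRoots_iff c).2 ((minpoly.monic hx).map σK)) ?_
      fun q hq hqx => ?_
    · rw [hxc]
      exact scaleRoots_aeval_eq_zero hmap
    · rw [degree_scaleRoots, degree_map]
      exact minpoly.min K x hq hqx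
  conv_rhs => rw [← hscale]
  rw [coeff_scaleRoots, coeff_map, natDegree_map]

namespace LaurentSeries

section Semiring

variable {R : Type*} [Semiring R]

noncomputable def expand (n : ℕ) (hn : n ≠ 0) : R⸨X⸩ →+* R⸨X⸩ :=
  HahnSeries.embDomainRingHom (AddMonoidHom.mulLeft (n : ℤ))
    (mul_right_injective₀ (by exact_mod_cast hn))
    fun _ _ => mul_le_mul_iff_right₀ (by positivity)

variable {n : ℕ} {hn : n ≠ 0}

theorem coeff_expand_mul (f : R⸨X⸩) (m : ℤ) : (expand n hn f).coeff (n * m) = f.coeff m :=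
  HahnSeries.embDomain_coeff

theorem coeff_expand_of_not_dvd (f : R⸨X⸩) {m : ℤ} (hm : ¬(n : ℤ) ∣ m) :
    (expand n hn f).coeff m = 0 :=
  HahnSeries.embDomain_of_notMem_range fun ⟨k, hk⟩ => hm ⟨k, hk.symm⟩

theorem expand_single (m : ℤ) (r : R) :
    expand n hn (HahnSeries.single m r) = HahnSeries.single (n * m) r :=
  HahnSeries.embDomain_single

end Semiring

variable {n : ℕ} {hn : n ≠ 0}

theorem expand_coe {R : Type*} [CommRing R] (f : PowerSeries R) :
    expand n hn (f : R⸨X⸩) = (PowerSeries.expand n hn f : R⸨X⸩) := by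
  have hn' : (0 : ℤ) < n := by exact_mod_cast hn.bot_lt
  ext m
  by_cases hm : (n : ℤ) ∣ m
  · obtain ⟨k, rfl⟩ := hm
    rw [coeff_expand_mul, PowerSeries.coeff_coe, PowerSeries.coeff_coe]
    rcases lt_or_ge k 0 with hk | hk
    · rw [if_pos hk, if_pos (mul_neg_of_pos_of_neg hn' hk)]
    · rw [if_neg hk.not_gt, if_neg (mul_nonneg hn'.le hk).not_gt, Int.natAbs_mul,
        Int.natAbs_natCast, PowerSeries.coeff_expand_mul]
  · rw [coeff_expand_of_not_dvd _ hm, PowerSeries.coeff_coe]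
    split_ifs with hneg
    · rfl
    · rw [PowerSeries.coeff_expand_of_not_dvd]
      rintro ⟨k, hk⟩
      exact hm ⟨k, by omega⟩

theorem expand_algebraMap {K : Type*} [Field K] (p : K[X]) :
    expand n hn (algebraMap K[X] K⸨X⸩ p) = algebraMap K[X] K⸨X⸩ (Polynomial.expand K n p) :=
  DFunLike.congr_fun (Polynomial.ringHom_ext (f := (expand n hn).comp (algebraMap K[X] K⸨X⸩))
    (g := (algebraMap K[X] K⸨X⸩).comp (Polynomial.expand K n).toRingHom)
    (fun a => by simp [algebraMap_hahnSeries_apply, expand_single])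
    (by simp [algebraMap_hahnSeries_apply, expand_single])) p

end LaurentSeries

namespace RatFunc

variable {K : Type*} [Field K]

theorem nonZeroDivisors_le_comap_expand {n : ℕ} (hn : n ≠ 0) :
    K[X]⁰ ≤ K[X]⁰.comap (Polynomial.expand K n) :=
  nonZeroDivisors_le_comap_nonZeroDivisors_of_injective _ (expand_injective hn.bot_lt)

noncomputable def expand (n : ℕ) (hn : n ≠ 0) : K⟮X⟯ →+* K⟮X⟯ :=
  mapRingHom (Polynomial.expand K n) (nonZeroDivisors_le_comap_expand hn)

variable {n : ℕ} {hn : n ≠ 0}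

theorem expand_algebraMap (p : K[X]) :
    expand n hn (algebraMap K[X] K⟮X⟯ p) = algebraMap K[X] K⟮X⟯ (Polynomial.expand K n p) := by
  simpa [expand, coe_mapRingHom_eq_coe_map] using
    map_apply_div (Polynomial.expand K n) (nonZeroDivisors_le_comap_expand hn) p 1

theorem _root_.LaurentSeries.expand_comp_algebraMap :
    (LaurentSeries.expand n hn).comp (algebraMap K⟮X⟯ K⸨X⸩) =
      (algebraMap K⟮X⟯ K⸨X⸩).comp (expand n hn) := by
  refine IsLocalization.ringHom_ext K[X]⁰ (RingHom.ext fun p => ?_)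
  simp only [RingHom.comp_apply, expand_algebraMap, ← IsScalarTower.algebraMap_apply,
    LaurentSeries.expand_algebraMap]

/-- `expand` preserves the order of vanishing at `1`, while the factor `(1 - X) ^ k` raises it
by `k`. -/
theorem eq_zero_of_expand_mul_one_sub_X_pow (hnK : (n : K) ≠ 0) {k : ℕ} (hk : k ≠ 0)
    {r : K⟮X⟯} (h : expand n hn r * (1 - X) ^ k = r) : r = 0 := by
  by_contra hr
  set a := r.num
  set b := r.denom
  have ha : a ≠ 0 := num_ne_zero hr
  have hb : b ≠ 0 := denom_ne_zero r
  have hexp : ∀ {p : K[X]}, p ≠ 0 → Polynomial.expand K n p ≠ 0 :=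
    (Polynomial.expand_ne_zero hn.bot_lt).2
  have hpoly :
      Polynomial.expand K n a * (1 - Polynomial.X) ^ k * b = a * Polynomial.expand K n b := by
    rw [← num_div_denom r, map_div₀, expand_algebraMap, expand_algebraMap, div_mul_eq_mul_div,
      div_eq_div_iff (algebraMap_ne_zero (hexp hb)) (algebraMap_ne_zero hb)] at h
    apply algebraMap_injective K
    simpa using h
  have hw0 : (1 - Polynomial.X : K[X]) ^ k ≠ 0 :=
    pow_ne_zero _ fun h => by simpa using congrArg (Polynomial.eval 0) h
  have hw : rootMultiplicity 1 ((1 - Polynomial.X : K[X]) ^ k) = k := by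
    rw [show (1 - Polynomial.X : K[X]) = -1 * (Polynomial.X - Polynomial.C 1) by
        rw [Polynomial.C_1]; ring,
      mul_pow, rootMultiplicity_mul_X_sub_C_pow (by simp), rootMultiplicity_eq_zero (by simp),
      zero_add]
  have hmult := congrArg (rootMultiplicity 1) hpoly
  rw [rootMultiplicity_mul (mul_ne_zero (mul_ne_zero (hexp ha) hw0) hb),
    rootMultiplicity_mul (mul_ne_zero (hexp ha) hw0),
    rootMultiplicity_mul (mul_ne_zero ha (hexp hb)), hw, rootMultiplicity_one_expand hnK,
    rootMultiplicity_one_expand hnK] at hmult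
  omega

end RatFunc

theorem coeff_fTM_two_mul (m : ℕ) : PowerSeries.coeff (2 * m) fTM = PowerSeries.coeff m fTM := by
  rcases eq_or_ne m 0 with rfl | hm
  · rfl
  simp only [fTM, PowerSeries.coeff_mk]
  rw [show 2 * m = 0 + 2 * m by ring, Nat.digits_add 2 one_lt_two 0 m two_pos (Or.inr hm),
    List.sum_cons, zero_add]

theorem coeff_fTM_two_mul_add_one (m : ℕ) :
    PowerSeries.coeff (2 * m + 1) fTM = -PowerSeries.coeff m fTM := by
  simp only [fTM, PowerSeries.coeff_mk]
  rw [show 2 * m + 1 = 1 + 2 * m by ring,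
    Nat.digits_add 2 one_lt_two 1 m one_lt_two (Or.inl one_ne_zero), List.sum_cons, pow_add,
    pow_one, neg_one_mul]

theorem fTM_eq_one_sub_X_mul_expand :
    fTM = (1 - PowerSeries.X) * PowerSeries.expand 2 two_ne_zero fTM := by
  ext n
  rw [sub_mul, one_mul, map_sub]
  obtain ⟨m, rfl | rfl⟩ := Nat.even_or_odd' n
  · rw [PowerSeries.coeff_expand_mul, coeff_fTM_two_mul]
    rcases m with _ | m
    · simp
    · rw [show 2 * (m + 1) = (2 * m + 1) + 1 by ring, PowerSeries.coeff_succ_X_mul,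
        PowerSeries.coeff_expand_of_not_dvd _ _ _ (by omega), sub_zero]
  · rw [PowerSeries.coeff_succ_X_mul, PowerSeries.coeff_expand_of_not_dvd _ _ _ (by omega),
      PowerSeries.coeff_expand_mul, coeff_fTM_two_mul_add_one, zero_sub]

theorem coe_fTM_eq_one_sub_X_mul_expand :
    (fTM : ℂ⸨X⸩) =
      algebraMap ℂ⟮X⟯ ℂ⸨X⸩ (1 - RatFunc.X) * LaurentSeries.expand 2 two_ne_zero fTM := by
  conv_lhs => rw [fTM_eq_one_sub_X_mul_expand]
  rw [LaurentSeries.expand_coe, map_mul, map_sub, map_one, map_sub, map_one, RatFunc.coe_X,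
    PowerSeries.coe_X]

theorem coe_fTM_ne_zero : (fTM : ℂ⸨X⸩) ≠ 0 :=
  (map_ne_zero_iff _ HahnSeries.ofPowerSeries_injective).2 fun h => by
    simpa [fTM] using congrArg (PowerSeries.coeff 0) h

/-- **Transcendence of the Thue–Morse series over `ℂ(x)`.**
The series `f_TM`, viewed inside the field of formal Laurent series `ℂ((x))`,
is transcendental over the field `ℂ(x)` of rational functions. -/
theorem stmt_1 : Transcendental (RatFunc ℂ) (fTM : LaurentSeries ℂ) := by
  intro halg
  have hx := halg.isIntegral
  have hcoeff := minpoly.map_coeff_mul_pow_eq_coeff LaurentSeries.expand_comp_algebraMap hx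
    coe_fTM_eq_one_sub_X_mul_expand 0
  exact minpoly.coeff_zero_ne_zero hx coe_fTM_ne_zero <|
    RatFunc.eq_zero_of_expand_mul_one_sub_X_pow two_ne_zero (minpoly.natDegree_pos hx).ne' hcoeff
end

section
/- Let U be a perfect field of characteristic p > 0 containing 𝔽_q, τ : U → U an 𝔽_q-automorphism, ℛ = U[X_1, …, X_N], D_1, …, D_N ∈ U^×, and B_1, …, B_N ∈ U. For P ∈ ℛ write P̃ := P^τ(D_1 X_1 + B_1, …, D_N X_N + B_N), where P^τ is P with τ applied to its coefficients. If P ∈ ℛ is a non-constant polynomial such that P̃/P ∈ ℛ, then there exists a polynomial G ∈ ℛ of the form G = ∑_{i=1}^N c_i X_i + B^p, with c_1, …, c_N ∈ U not all zero and B ∈ ℛ, such that G̃/G ∈ ℛ. Moreover, if W is the subfield of U generated by 𝔽_q and the coefficients of P, then there exists M ≥ 1 such that c^{p^M} ∈ W for every coefficient c of G. -/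
/-- The twist `P ↦ P̃ = P^τ(D₁X₁ + B₁, …, D_N X_N + B_N)` of a polynomial
`P ∈ ℛ = U[X₁,…,X_N]`, where `P^τ` is `P` with `τ` applied to its
coefficients. -/
noncomputable def polyTwist {U : Type*} [Field U] {N : ℕ}
    (τ : U ≃+* U) (D B : Fin N → U) (P : MvPolynomial (Fin N) U) :
    MvPolynomial (Fin N) U :=
  MvPolynomial.aeval
    (fun i => MvPolynomial.C (D i) * MvPolynomial.X i + MvPolynomial.C (B i))
    (MvPolynomial.map (τ : U →+* U) P)

/-!
The twist is a ring endomorphism that does not raise the total degree, so `P ∣ P̃` forces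
`P̃ = q P` for a constant `q`. This eigen-relation is inherited by every partial derivative
(`∂ᵢP̃ = Dᵢ (∂ᵢP)~`) and, because `U` is perfect and Frobenius is injective, by a `p`-th root.
Descend on the total degree: if all `∂ᵢP` vanish, `P` is a `p`-th power and we pass to its root;
if some `∂ᵢP` is non-constant, we pass to it; otherwise the `∂ᵢP` are constants `cᵢ`, not all
zero, and `P - ∑ cᵢ Xᵢ` has vanishing derivatives, so `P` itself is `∑ cᵢ Xᵢ + Bᵖ`.
Derivatives only multiply coefficients by integers and each root costs one Frobenius, which
gives the bound `c ^ p ^ M ∈ W`.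
-/

namespace MvPolynomial

variable {σ R : Type*}

section CommSemiring

variable [CommSemiring R]

theorem totalDegree_pderiv_lt {i : σ} {f : MvPolynomial σ R} (h : pderiv i f ≠ 0) :
    (pderiv i f).totalDegree < f.totalDegree := by
  have key : ∀ m ∈ (pderiv i f).support, (m.sum fun _ e => e) < f.totalDegree := by
    intro m hm
    rw [mem_support_iff, coeff_pderiv] at hm
    have hmem : m + Finsupp.single i 1 ∈ f.support := mem_support_iff.mpr (left_ne_zero_of_mul hm)
    have := le_totalDegree hmem
    rw [Finsupp.sum_add_index' (fun _ => rfl) fun _ _ _ => rfl, Finsupp.sum_single_index rfl]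
      at this
    omega
  obtain ⟨m₀, hm₀⟩ := support_nonempty.mpr h
  exact (Finset.sup_lt_iff (Nat.zero_lt_of_lt (key m₀ hm₀))).mpr key

theorem totalDegree_aeval_le_of_totalDegree_le_one {τ : Type*} {g : σ → MvPolynomial τ R}
    (hg : ∀ i, (g i).totalDegree ≤ 1) (f : MvPolynomial σ R) :
    (aeval g f).totalDegree ≤ f.totalDegree := by
  conv_lhs => rw [f.as_sum]
  rw [map_sum]
  refine totalDegree_finsetSum_le fun m hm => ?_
  rw [aeval_monomial, ← C_eq_algebraMap]
  refine (totalDegree_mul _ _).trans ?_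
  rw [totalDegree_C, zero_add]
  refine (totalDegree_finsetProd _ _).trans ((Finset.sum_le_sum fun i _ => ?_).trans
    (le_totalDegree hm))
  calc (g i ^ m i).totalDegree ≤ m i * (g i).totalDegree := totalDegree_pow _ _
    _ ≤ m i := by simpa using Nat.mul_le_mul_left (m i) (hg i)

end CommSemiring

theorem totalDegree_pow_of_isDomain [CommRing R] [IsDomain R] {f : MvPolynomial σ R}
    (hf : f ≠ 0) (n : ℕ) : (f ^ n).totalDegree = n * f.totalDegree := by
  induction n with
  | zero => simp
  | succ n ih =>
    rw [pow_succ, totalDegree_mul_of_isDomain (pow_ne_zero _ hf) hf, ih, Nat.succ_mul]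

section CharP

variable [CommSemiring R] {p : ℕ} [CharP R p]

theorem coeff_smul_pow_char [Fact p.Prime] (f : MvPolynomial σ R) (m : σ →₀ ℕ) :
    coeff (p • m) (f ^ p) = coeff m f ^ p := by
  rw [← map_frobenius_expand p, coeff_map, coeff_expand_smul _ (NeZero.ne p), frobenius_def]

theorem dvd_of_forall_pderiv_eq_zero [NoZeroDivisors R] {f : MvPolynomial σ R}
    (h : ∀ i, pderiv i f = 0) {m : σ →₀ ℕ} (hm : m ∈ f.support) (i : σ) : p ∣ m i := by
  obtain h0 | hpos := Nat.eq_zero_or_pos (m i)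
  · simp [h0]
  have hle : Finsupp.single i 1 ≤ m := Finsupp.single_le_iff.mpr hpos
  have hcoeff := congrArg (coeff (m - Finsupp.single i 1)) (h i)
  rw [coeff_pderiv, tsub_add_cancel_of_le hle, coeff_zero, Finsupp.tsub_apply,
    Finsupp.single_eq_same] at hcoeff
  rcases mul_eq_zero.mp hcoeff with hc | hc
  · exact absurd hc (mem_support_iff.mp hm)
  · rw [← CharP.cast_eq_zero_iff R p, ← Nat.sub_add_cancel hpos]
    exact_mod_cast hc

theorem exists_pow_char_eq_of_dvd [Fact p.Prime] [PerfectRing R p] {f : MvPolynomial σ R}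
    (h : ∀ m ∈ f.support, ∀ i, p ∣ m i) : ∃ g : MvPolynomial σ R, g ^ p = f := by
  refine ⟨∑ m ∈ f.support, monomial (m.mapRange (· / p) (Nat.zero_div p))
    ((frobeniusEquiv R p).symm (coeff m f)), ?_⟩
  rw [sum_pow_char]
  conv_rhs => rw [f.as_sum]
  refine Finset.sum_congr rfl fun m hm => ?_
  have hsmul : p • m.mapRange (· / p) (Nat.zero_div p) = m := by
    ext j
    exact Nat.mul_div_cancel' (h m hm j)
  rw [monomial_pow, hsmul, ← frobenius_def, frobenius_apply_frobeniusEquiv_symm]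

theorem exists_pow_char_eq_of_forall_pderiv_eq_zero [Fact p.Prime] [NoZeroDivisors R]
    [PerfectRing R p] {f : MvPolynomial σ R} (h : ∀ i, pderiv i f = 0) :
    ∃ g : MvPolynomial σ R, g ^ p = f :=
  exists_pow_char_eq_of_dvd fun _ hm => dvd_of_forall_pderiv_eq_zero h hm

end CharP

theorem exists_eq_sum_C_mul_X_add_pow_char {p : ℕ} [Fact p.Prime] [CommRing R] [IsDomain R]
    [CharP R p] [PerfectRing R p] [Fintype σ] {f : MvPolynomial σ R}
    (h : ∀ i, (pderiv i f).totalDegree = 0) :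
    ∃ g : MvPolynomial σ R, f = ∑ i, C (coeff 0 (pderiv i f)) * X i + g ^ p := by
  classical
  have hderiv : ∀ i, pderiv i (f - ∑ j, C (coeff 0 (pderiv j f)) * X j) = 0 := by
    intro i
    simp only [map_sub, map_sum, pderiv_C_mul, pderiv_X, Pi.single_apply, mul_ite, mul_one,
      mul_zero, Finset.sum_ite_eq', Finset.mem_univ, if_true]
    rw [← totalDegree_eq_zero_iff_eq_C.mp (h i), sub_self]
  obtain ⟨g, hg⟩ := exists_pow_char_eq_of_forall_pderiv_eq_zero (p := p) hderiv
  exact ⟨g, by rw [hg, add_sub_cancel]⟩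

section Twist

variable {U : Type*} [Field U] (τ : U ≃+* U) (D B : σ → U)

noncomputable def twist : MvPolynomial σ U →+* MvPolynomial σ U :=
  (aeval fun i => C (D i) * X i + C (B i)).toRingHom.comp (map (τ : U →+* U))

theorem _root_.polyTwist_eq_twist {N : ℕ} (D B : Fin N → U) (f : MvPolynomial (Fin N) U) :
    polyTwist τ D B f = twist τ D B f :=
  rfl

variable {τ D B}

@[simp]
theorem twist_C (a : U) : twist τ D B (C a) = C (τ a) := by
  simp [twist]

@[simp]
theorem twist_X (i : σ) : twist τ D B (X i) = C (D i) * X i + C (B i) := by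
  simp [twist]

theorem totalDegree_twist_le (f : MvPolynomial σ U) :
    (twist τ D B f).totalDegree ≤ f.totalDegree := by
  have haffine : ∀ i, (C (D i) * X i + C (B i) : MvPolynomial σ U).totalDegree ≤ 1 := fun i =>
    (totalDegree_add _ _).trans (max_le ((totalDegree_mul _ _).trans (by simp)) (by simp))
  exact (totalDegree_aeval_le_of_totalDegree_le_one haffine _).trans
    (totalDegree_le_of_support_subset (support_map_subset _ _))

theorem exists_twist_eq_C_mul_of_dvd {f : MvPolynomial σ U} (h : f ∣ twist τ D B f) :
    ∃ q, twist τ D B f = C q * f := by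
  obtain ⟨s, hs⟩ := h
  obtain rfl | hs0 := eq_or_ne s 0
  · exact ⟨0, by simp [hs]⟩
  obtain rfl | hf0 := eq_or_ne f 0
  · exact ⟨0, by simp⟩
  have hdeg := totalDegree_twist_le (τ := τ) (D := D) (B := B) f
  rw [hs, totalDegree_mul_of_isDomain hf0 hs0] at hdeg
  refine ⟨coeff 0 s, ?_⟩
  rw [hs, mul_comm, ← totalDegree_eq_zero_iff_eq_C.mp (by omega)]

theorem pderiv_twist (i : σ) (f : MvPolynomial σ U) :
    pderiv i (twist τ D B f) = C (D i) * twist τ D B (pderiv i f) := by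
  induction f using MvPolynomial.induction_on with
  | C a => simp
  | add f g hf hg => simp only [map_add, hf, hg, mul_add]
  | mul_X f j hf =>
    simp only [map_mul, pderiv_mul, hf, twist_X, map_add, pderiv_C]
    rcases eq_or_ne j i with rfl | hij
    · simp only [pderiv_X_self, map_one]
      ring
    · simp only [pderiv_X_of_ne hij, map_zero]
      ring

theorem twist_pderiv_eq_C_mul {i : σ} (hD : D i ≠ 0) {f : MvPolynomial σ U} {q : U}
    (hq : twist τ D B f = C q * f) :
    twist τ D B (pderiv i f) = C (q / D i) * pderiv i f := by
  have h := pderiv_twist (τ := τ) (D := D) (B := B) i f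
  rw [hq, pderiv_C_mul] at h
  rw [div_eq_inv_mul, C_mul, mul_assoc, h, ← mul_assoc, ← C_mul, inv_mul_cancel₀ hD, C_1,
    one_mul]

theorem twist_eq_C_mul_of_pow_char_eq {p : ℕ} [Fact p.Prime] [CharP U p] [PerfectRing U p]
    {f g : MvPolynomial σ U} (hg : g ^ p = f) {q : U} (hq : twist τ D B f = C q * f) :
    twist τ D B g = C ((frobeniusEquiv U p).symm q) * g := by
  apply frobenius_inj (MvPolynomial σ U) p
  rw [frobenius_def, frobenius_def, mul_pow, ← map_pow, ← map_pow, hg, ← frobenius_def,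
    frobenius_apply_frobeniusEquiv_symm, hq]

end Twist

variable {U : Type*} [Field U] {τ : U ≃+* U} {D B : σ → U} {p : ℕ} [Fact p.Prime] [CharP U p]
  [PerfectRing U p] [Fintype σ]

theorem exists_sum_C_mul_X_add_pow_char_dvd_twist (hD : ∀ i, D i ≠ 0) (W : Subfield U)
    {f : MvPolynomial σ U} (hf : 0 < f.totalDegree) {q : U} (hq : twist τ D B f = C q * f)
    {M : ℕ} (hM : ∀ m, coeff m f ^ p ^ M ∈ W) :
    ∃ (c : σ → U) (g : MvPolynomial σ U), (∃ i, c i ≠ 0) ∧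
      (∑ i, C (c i) * X i + g ^ p) ∣ twist τ D B (∑ i, C (c i) * X i + g ^ p) ∧
      ∃ M' : ℕ, ∀ m, coeff m (∑ i, C (c i) * X i + g ^ p) ^ p ^ M' ∈ W := by
  induction hn : f.totalDegree using Nat.strong_induction_on generalizing f q M with
  | _ n ih =>
  subst hn
  by_cases hconst : ∀ i, (pderiv i f).totalDegree = 0
  · by_cases hzero : ∀ i, pderiv i f = 0
    · obtain ⟨g, rfl⟩ := exists_pow_char_eq_of_forall_pderiv_eq_zero (p := p) hzero
      have hg0 : g ≠ 0 := by
        rintro rfl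
        simp [zero_pow (NeZero.ne p)] at hf
      have hdeg := totalDegree_pow_of_isDomain hg0 p
      have hp := (Fact.out : p.Prime).two_le
      refine ih g.totalDegree (by nlinarith) (by nlinarith) (twist_eq_C_mul_of_pow_char_eq rfl hq)
        (M := M + 1) (fun m => ?_) rfl
      rw [pow_succ', pow_mul, ← coeff_smul_pow_char]
      exact hM _
    · obtain ⟨j, hj⟩ := not_forall.mp hzero
      obtain ⟨g, hg⟩ := exists_eq_sum_C_mul_X_add_pow_char (p := p) hconst
      refine ⟨fun i => coeff 0 (pderiv i f), g, ⟨j, fun h => hj ?_⟩, ?_, M, ?_⟩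
      · rw [totalDegree_eq_zero_iff_eq_C.mp (hconst j), show coeff 0 (pderiv j f) = 0 from h,
          C_0]
      · rw [← hg, hq]
        exact dvd_mul_left _ _
      · rwa [← hg]
  · obtain ⟨i, hi⟩ := not_forall.mp hconst
    have hne : pderiv i f ≠ 0 := by
      rintro h
      simp [h] at hi
    refine ih _ (totalDegree_pderiv_lt hne) (Nat.pos_of_ne_zero hi)
      (twist_pderiv_eq_C_mul (hD i) hq) (M := M) (fun m => ?_) rfl
    rw [coeff_pderiv, mul_pow]
    exact mul_mem (hM _) (pow_mem (add_mem (natCast_mem W _) (one_mem W)) _)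

end MvPolynomial

theorem stmt_19_general (p : ℕ) [Fact p.Prime]
    (U : Type*) [Field U] [CharP U p] [PerfectRing U p]
    (Fq : Type*) [Field Fq] [Algebra Fq U]
    (τ : U ≃+* U)
    (N : ℕ) (D B : Fin N → U) (hD : ∀ i, D i ≠ 0)
    (P : MvPolynomial (Fin N) U)
    (hPnc : 0 < P.totalDegree)
    (hdvd : P ∣ polyTwist τ D B P) :
    ∃ (c : Fin N → U) (Bp : MvPolynomial (Fin N) U),
      (∃ i, c i ≠ 0) ∧
      (∑ i : Fin N, MvPolynomial.C (c i) * MvPolynomial.X i + Bp ^ p) ∣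
        polyTwist τ D B (∑ i : Fin N, MvPolynomial.C (c i) * MvPolynomial.X i + Bp ^ p) ∧
      ∃ M : ℕ, 1 ≤ M ∧
        ∀ m : Fin N →₀ ℕ,
          ((∑ i : Fin N, MvPolynomial.C (c i) * MvPolynomial.X i + Bp ^ p).coeff m) ^ p ^ M ∈
            Subfield.closure (Set.range (algebraMap Fq U) ∪ Set.range P.coeff) := by
  simp only [polyTwist_eq_twist] at hdvd ⊢
  obtain ⟨q, hq⟩ := MvPolynomial.exists_twist_eq_C_mul_of_dvd hdvd
  have hP : ∀ m, P.coeff m ^ p ^ 0 ∈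
      Subfield.closure (Set.range (algebraMap Fq U) ∪ Set.range P.coeff) := fun m => by
    rw [pow_zero, pow_one]
    exact Subfield.subset_closure (Set.mem_union_right _ ⟨m, rfl⟩)
  obtain ⟨c, g, hc, hG, M, hM⟩ :=
    MvPolynomial.exists_sum_C_mul_X_add_pow_char_dvd_twist hD _ hPnc hq hP
  refine ⟨c, g, hc, hG, M + 1, Nat.le_add_left 1 M, fun m => ?_⟩
  rw [pow_succ, pow_mul]
  exact pow_mem (hM m) p

/-- **Proposition (key lemma for Kubota-type results in characteristic `p`).**
Let `U` be a perfect field of characteristic `p > 0` containing `𝔽_q`, and let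
`τ : U → U` be an `𝔽_q`-automorphism.  Let `ℛ = U[X₁,…,X_N]`, `D_i ∈ U^×`,
`B_i ∈ U`, and write `P̃ = P^τ(D₁X₁+B₁, …, D_N X_N+B_N)`.  If `P ∈ ℛ` is a
non-constant polynomial with `P̃/P ∈ ℛ` (i.e. `P ∣ P̃`), then there is a
polynomial `G = ∑_i c_i X_i + B^p ∈ ℛ`, with `c_1, …, c_N ∈ U` not all zero
and `B ∈ ℛ`, such that `G ∣ G̃`; moreover, if `W` is the subfield of `U`
generated by `𝔽_q` and the coefficients of `P`, then there exists `M ≥ 1`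
with `c^{p^M} ∈ W` for every coefficient `c` of `G`. -/
theorem stmt_19 (p : ℕ) [Fact p.Prime]
    (U : Type*) [Field U] [CharP U p] [PerfectRing U p]
    (Fq : Type*) [Field Fq] [Fintype Fq] [Algebra Fq U]
    (τ : U ≃+* U) (hτFq : ∀ a : Fq, τ (algebraMap Fq U a) = algebraMap Fq U a)
    (N : ℕ) (D B : Fin N → U) (hD : ∀ i, D i ≠ 0)
    (P : MvPolynomial (Fin N) U)
    (hPnc : 0 < P.totalDegree)
    (hdvd : P ∣ polyTwist τ D B P) :
    ∃ (c : Fin N → U) (Bp : MvPolynomial (Fin N) U),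
      (∃ i, c i ≠ 0) ∧
      (∑ i : Fin N, MvPolynomial.C (c i) * MvPolynomial.X i + Bp ^ p) ∣
        polyTwist τ D B (∑ i : Fin N, MvPolynomial.C (c i) * MvPolynomial.X i + Bp ^ p) ∧
      ∃ M : ℕ, 1 ≤ M ∧
        ∀ m : Fin N →₀ ℕ,
          ((∑ i : Fin N, MvPolynomial.C (c i) * MvPolynomial.X i + Bp ^ p).coeff m) ^ p ^ M ∈
            Subfield.closure (Set.range (algebraMap Fq U) ∪ Set.range P.coeff) :=
  stmt_19_general p U Fq τ N D B hD P hPnc hdvd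
end
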